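/- Let D be the trapezoidal fuzzy variable (r1,r2,r3,r4) with 0 < r1 < r2 ≤ r3 < r4. Then the credibilistic expected value (the case λ = 1/2) satisfies E_C(1/D) = ∫_0^∞ m_{1/2}(D ≤ 1/r) dr = (1/(2(r2 − r1)))·ln(r2/r1) + (1/(2(r4 − r3)))·ln(r4/r3). -/

import Mathlib

open MeasureTheory Set

/-- Possibility measure of an event `A` built from membership function `μ`
(with the convention `sSup ∅ = 0`, which holds for `Real.sSup`). -/
noncomputable def Pos (μ : ℝ → ℝ) (A : Set ℝ) : ℝ := sSup (μ '' A)

/-- Necessity measure associated with `μ`. -/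
noncomputable def Nec (μ : ℝ → ℝ) (A : Set ℝ) : ℝ := 1 - Pos μ Aᶜ

/-- The parametric measure `m_λ(A) = λ·Pos(A) + (1−λ)·Nec(A)`. -/
noncomputable def mMeas (l : ℝ) (μ : ℝ → ℝ) (A : Set ℝ) : ℝ :=
  l * Pos μ A + (1 - l) * Nec μ A

/-- The `m_λ`-expected value of the fuzzy variable with membership function `μ`:
`E_λ(ξ) = ∫_{−∞}^0 (m_λ([r,∞)) − 1) dr + ∫_0^∞ m_λ([r,∞)) dr`. -/
noncomputable def Eexp (l : ℝ) (μ : ℝ → ℝ) : ℝ :=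
  (∫ r in Set.Iic (0:ℝ), (mMeas l μ (Set.Ici r) - 1)) +
  (∫ r in Set.Ioi (0:ℝ), mMeas l μ (Set.Ici r))

/-- Membership function of the trapezoidal fuzzy variable `(r1,r2,r3,r4)`. -/
noncomputable def trapMF (r1 r2 r3 r4 : ℝ) : ℝ → ℝ := fun x =>
  if r1 ≤ x ∧ x ≤ r2 then (x - r1) / (r2 - r1)
  else if r2 ≤ x ∧ x ≤ r3 then 1
  else if r3 ≤ x ∧ x ≤ r4 then (r4 - x) / (r4 - r3)
  else 0

/-- Membership function of the triangular fuzzy variable `(r1,r2,r4)`. -/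
noncomputable def triMF (r1 r2 r4 : ℝ) : ℝ → ℝ := fun x =>
  if r1 ≤ x ∧ x ≤ r2 then (x - r1) / (r2 - r1)
  else if r2 ≤ x ∧ x ≤ r4 then (r4 - x) / (r4 - r2)
  else 0

/-- Membership function of the trapezoidal fuzzy variable `(a−α, a, b, b+β)`. -/
noncomputable def trapMF2 (a b α β : ℝ) : ℝ → ℝ := fun x =>
  if a - α ≤ x ∧ x ≤ a then 1 - (a - x) / α
  else if a ≤ x ∧ x ≤ b then 1
  else if b ≤ x ∧ x ≤ b + β then 1 - (x - b) / β
  else 0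

/-- Membership function of the triangular fuzzy variable `(a−α, a, a+β)`. -/
noncomputable def triMF2 (a α β : ℝ) : ℝ → ℝ := fun x =>
  if a - α ≤ x ∧ x ≤ a then 1 - (a - x) / α
  else if a ≤ x ∧ x ≤ a + β then 1 - (x - a) / β
  else 0

/-! The membership function of `(r1,r2,r3,r4)` is `min (ramp r1 r2) (1 - ramp r3 r4)`, where
`ramp a b` rises linearly from `0` at `a` to `1` at `b`. The left ramp is nondecreasing and the
right one nonincreasing, so `sup_{x ≤ t} μ = ramp r1 r2 t` and `sup_{x > t} μ = 1 - ramp r3 r4 t`,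
where by continuity of `μ` the supremum over the open ray `(t, ∞)` is the maximum over `[t, ∞)`;
whence `m_λ(D ≤ t) = λ · ramp r1 r2 t + (1 - λ) · ramp r3 r4 t`. Finally, for `0 < a < b`,
`∫_0^∞ ramp a b (1/r) dr = 1/b + ∫_{1/b}^{1/a} (1/r - a)/(b - a) dr = log (b/a) / (b - a)`. -/

theorem csSup_image_Ioi_eq_of_isGreatest {α β : Type*} [LinearOrder α] [TopologicalSpace α]
    [OrderTopology α] [DenselyOrdered α] [NoMaxOrder α] [ConditionallyCompleteLinearOrder β]
    [TopologicalSpace β] [OrderTopology β] {f : α → β} (hf : Continuous f) {t : α} {v : β}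
    (h : IsGreatest (f '' Ici t) v) : sSup (f '' Ioi t) = v := by
  have hsub : f '' Ici t ⊆ closure (f '' Ioi t) := by
    rw [← closure_Ioi]
    exact image_closure_subset_closure_image hf
  exact ((isLUB_iff_of_subset_of_subset_closure (image_mono Ioi_subset_Ici_self) hsub).2
    h.isLUB).csSup_eq (nonempty_Ioi.image f)

noncomputable def ramp (a b t : ℝ) : ℝ := max 0 (min 1 ((t - a) / (b - a)))

section Ramp

variable {a b t : ℝ}

theorem ramp_nonneg : 0 ≤ ramp a b t := le_max_left _ _

theorem ramp_le_one : ramp a b t ≤ 1 := max_le zero_le_one (min_le_left _ _)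

theorem ramp_eq_zero (hab : a ≤ b) (ht : t ≤ a) : ramp a b t = 0 :=
  max_eq_left (min_le_of_right_le (div_nonpos_of_nonpos_of_nonneg (by linarith) (by linarith)))

theorem ramp_eq_one (hab : a < b) (ht : b ≤ t) : ramp a b t = 1 := by
  rw [ramp, min_eq_left ((one_le_div (by linarith)).2 (by linarith)), max_eq_right zero_le_one]

theorem ramp_eq_div (ha : a ≤ t) (hb : t ≤ b) : ramp a b t = (t - a) / (b - a) := by
  rw [ramp, min_eq_right (div_le_one_of_le₀ (by linarith) (by linarith)),
    max_eq_right (div_nonneg (by linarith) (by linarith))]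

theorem monotone_ramp (hab : a ≤ b) : Monotone (ramp a b) := fun s t hst => by
  have : 0 ≤ b - a := sub_nonneg.2 hab
  unfold ramp
  gcongr

theorem continuous_ramp : Continuous (ramp a b) := by
  unfold ramp
  fun_prop

theorem integrableOn_ramp_inv (ha : 0 < a) (hab : a ≤ b) :
    IntegrableOn (fun r => ramp a b (1 / r)) (Ioi 0) := by
  rw [← Ioc_union_Ioi_eq_Ioi (one_div_pos.2 ha).le]
  refine IntegrableOn.union ?_ ?_
  · refine Measure.integrableOn_of_bounded (M := 1) (by simp) ?_ (.of_forall fun r => ?_)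
    · exact (continuous_ramp.measurable.comp (measurable_id.const_div 1)).aestronglyMeasurable
    · rw [Real.norm_of_nonneg ramp_nonneg]
      exact ramp_le_one
  · refine integrableOn_zero.congr_fun (fun r (hr : 1 / a < r) => ?_) measurableSet_Ioi
    have hr0 : 0 < r := (one_div_pos.2 ha).trans hr
    exact (ramp_eq_zero hab ((one_div_lt hr0 ha).2 hr).le).symm

theorem integral_ramp_inv (ha : 0 < a) (hab : a < b) :
    ∫ r in Ioi 0, ramp a b (1 / r) = Real.log (b / a) / (b - a) := by
  have hb : 0 < b := ha.trans hab
  have ha' : 0 < 1 / a := one_div_pos.2 ha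
  have hb' : 0 < 1 / b := one_div_pos.2 hb
  have hba : 1 / b < 1 / a := one_div_lt_one_div_of_lt ha hab
  have hint := integrableOn_ramp_inv ha hab.le
  have hii : ∀ {c d : ℝ}, 0 ≤ c → c ≤ d →
      IntervalIntegrable (fun r => ramp a b (1 / r)) volume c d := fun hc hcd =>
    (intervalIntegrable_iff_integrableOn_Ioc_of_le hcd).2
      (hint.mono_set fun r hr => hc.trans_lt hr.1)
  have hvanish : ∀ r ∈ Ioi (1 / a), ramp a b (1 / r) = 0 := fun r (hr : 1 / a < r) =>
    ramp_eq_zero hab.le ((one_div_lt (ha'.trans hr) ha).2 hr).le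
  have hflat : ∫ r in (0)..(1 / b), ramp a b (1 / r) = 1 / b := by
    rw [intervalIntegral.integral_congr_ae (g := fun _ => 1) (.of_forall fun r hr => ?_)]
    · simp
    · rw [uIoc_of_le hb'.le] at hr
      exact ramp_eq_one hab ((le_one_div hr.1 hb).1 hr.2)
  have hslope : ∫ r in (1 / b)..(1 / a), ramp a b (1 / r) =
      (Real.log (b / a) - a * (1 / a - 1 / b)) / (b - a) := by
    rw [intervalIntegral.integral_congr (g := fun r => (1 / r - a) / (b - a)) fun r hr => ?_]
    · rw [intervalIntegral.integral_div, intervalIntegral.integral_sub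
          (intervalIntegral.intervalIntegrable_one_div (fun r hr => ?_) continuousOn_id :
            IntervalIntegrable (fun r => 1 / r) _ _ _) intervalIntegrable_const,
        integral_one_div_of_pos hb' ha', intervalIntegral.integral_const, smul_eq_mul, mul_comm,
        show 1 / a / (1 / b) = b / a by field_simp]
      rw [uIcc_of_le hba.le] at hr
      exact (hb'.trans_le hr.1).ne'
    · rw [uIcc_of_le hba.le] at hr
      have hr0 : 0 < r := hb'.trans_le hr.1
      exact ramp_eq_div ((le_one_div ha hr0).2 hr.2) ((one_div_le hr0 hb).2 hr.1)
  rw [← Ioc_union_Ioi_eq_Ioi ha'.le,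
    setIntegral_union (Ioc_disjoint_Ioi le_rfl) measurableSet_Ioi
      (hint.mono_set Ioc_subset_Ioi_self) (hint.mono_set (Ioi_subset_Ioi ha'.le)),
    setIntegral_congr_fun measurableSet_Ioi hvanish, integral_zero, add_zero,
    ← intervalIntegral.integral_of_le ha'.le,
    ← intervalIntegral.integral_add_adjacent_intervals (hii le_rfl hb'.le) (hii hb'.le hba.le),
    hflat, hslope]
  field_simp [sub_ne_zero.2 hab.ne']
  ring

end Ramp

section Trapezoid

variable {r1 r2 r3 r4 : ℝ}

theorem trapMF_eq_min_ramp (h12 : r1 < r2) (h23 : r2 ≤ r3) (h34 : r3 < r4) (x : ℝ) :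
    trapMF r1 r2 r3 r4 x = min (ramp r1 r2 x) (1 - ramp r3 r4 x) := by
  unfold trapMF
  split_ifs with hl hf hr
  · rw [ramp_eq_div hl.1 hl.2, ramp_eq_zero h34.le (hl.2.trans h23), sub_zero,
      min_eq_left (div_le_one_of_le₀ (by linarith) (by linarith))]
  · have hx : r2 < x := by by_contra! h; exact hl ⟨by linarith, h⟩
    rw [ramp_eq_one h12 hx.le, ramp_eq_zero h34.le hf.2]
    norm_num
  · have hx : r3 < x := by by_contra! h; exact hf ⟨by linarith, h⟩
    rw [ramp_eq_one h12 (by linarith), ramp_eq_div hr.1 hr.2,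
      min_eq_right (sub_le_self _ (div_nonneg (by linarith) (by linarith)))]
    field_simp [sub_ne_zero.2 h34.ne']
    ring
  · rcases lt_or_ge x r1 with hx | hx
    · rw [ramp_eq_zero h12.le hx.le, ramp_eq_zero h34.le (by linarith)]
      norm_num
    · have hx4 : r4 < x := by
        by_contra! h
        by_cases hx2 : x ≤ r2
        · exact hl ⟨hx, hx2⟩
        by_cases hx3 : x ≤ r3
        · exact hf ⟨by linarith, hx3⟩
        · exact hr ⟨by linarith, h⟩
      rw [ramp_eq_one h12 (by linarith), ramp_eq_one h34 hx4.le]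
      norm_num

theorem continuous_trapMF (h12 : r1 < r2) (h23 : r2 ≤ r3) (h34 : r3 < r4) :
    Continuous (trapMF r1 r2 r3 r4) := by
  rw [funext (trapMF_eq_min_ramp h12 h23 h34)]
  exact continuous_ramp.min (continuous_const.sub continuous_ramp)

theorem sSup_trapMF_image_Iic (h12 : r1 < r2) (h23 : r2 ≤ r3) (h34 : r3 < r4) (t : ℝ) :
    sSup (trapMF r1 r2 r3 r4 '' Iic t) = ramp r1 r2 t := by
  refine IsGreatest.csSup_eq ⟨⟨min t r2, mem_Iic.2 (min_le_left t r2), ?_⟩, ?_⟩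
  · rw [trapMF_eq_min_ramp h12 h23 h34, ramp_eq_zero h34.le ((min_le_right _ _).trans h23),
      sub_zero, min_eq_left ramp_le_one]
    rcases le_total t r2 with h | h
    · rw [min_eq_left h]
    · rw [min_eq_right h, ramp_eq_one h12 le_rfl, ramp_eq_one h12 h]
  · rintro _ ⟨x, hx, rfl⟩
    rw [trapMF_eq_min_ramp h12 h23 h34]
    exact (min_le_left _ _).trans (monotone_ramp h12.le hx)

theorem sSup_trapMF_image_Ioi (h12 : r1 < r2) (h23 : r2 ≤ r3) (h34 : r3 < r4) (t : ℝ) :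
    sSup (trapMF r1 r2 r3 r4 '' Ioi t) = 1 - ramp r3 r4 t := by
  refine csSup_image_Ioi_eq_of_isGreatest (continuous_trapMF h12 h23 h34)
    ⟨⟨max t r2, mem_Ici.2 (le_max_left t r2), ?_⟩, ?_⟩
  · rw [trapMF_eq_min_ramp h12 h23 h34, ramp_eq_one h12 (le_max_right _ _),
      min_eq_right (sub_le_self _ ramp_nonneg)]
    rcases le_total t r2 with h | h
    · rw [max_eq_right h, ramp_eq_zero h34.le h23, ramp_eq_zero h34.le (h.trans h23)]
    · rw [max_eq_left h]
  · rintro _ ⟨x, hx, rfl⟩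
    rw [trapMF_eq_min_ramp h12 h23 h34]
    exact (min_le_right _ _).trans (sub_le_sub_left (monotone_ramp h34.le hx) 1)

theorem mMeas_trapMF_Iic (h12 : r1 < r2) (h23 : r2 ≤ r3) (h34 : r3 < r4) (l t : ℝ) :
    mMeas l (trapMF r1 r2 r3 r4) (Iic t) = l * ramp r1 r2 t + (1 - l) * ramp r3 r4 t := by
  rw [mMeas, Pos, Nec, Pos, compl_Iic, sSup_trapMF_image_Iic h12 h23 h34,
    sSup_trapMF_image_Ioi h12 h23 h34]
  ring

end Trapezoid

theorem stmt_7 (r1 r2 r3 r4 : ℝ)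
    (h0 : 0 < r1) (h12 : r1 < r2) (h23 : r2 ≤ r3) (h34 : r3 < r4) :
    (∫ r in Set.Ioi (0:ℝ), mMeas (1/2) (trapMF r1 r2 r3 r4) (Set.Iic (1 / r))) =
      1 / (2 * (r2 - r1)) * Real.log (r2 / r1) +
        1 / (2 * (r4 - r3)) * Real.log (r4 / r3) := by
  have h3 : 0 < r3 := by linarith
  simp_rw [mMeas_trapMF_Iic h12 h23 h34]
  rw [integral_add ((integrableOn_ramp_inv h0 h12.le).const_mul _)
      ((integrableOn_ramp_inv h3 h34.le).const_mul _),
    integral_const_mul, integral_const_mul, integral_ramp_inv h0 h12, integral_ramp_inv h3 h34]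
  field_simp
  ring
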